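/- Define the p-quadratic variation [f]_{n,p} = ( Σ_{i=1}^n |ξ(i)^2|_p )^{1/2} for a martingale difference sequence ξ(i). Then |S(n)|_p ≤ (p-1)·[f]_{n,p} for p ≥ 2, where S(n) = Σ ξ(i) and |η|_p = (E|η|^p)^{1/p}. -/

import Mathlib

/-!
The key step is Rio's inequality: if `E[|X|^(p-2) X Y] = 0` then
`‖X + Y‖_p² ≤ ‖X‖_p² + (p - 1) ‖Y‖_p²`. With `u t = E|X + t Y|^p` one has
`u' = p E[|X + t Y|^(p-2) (X + t Y) Y]`, which vanishes at `0`, and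
`u'' = p (p - 1) E[|X + t Y|^(p-2) Y²] ≤ p (p - 1) u^(1 - 2/p) ‖Y‖_p²` by Hölder, so that
`(u^(2/p))'' ≤ 2 (p - 1) ‖Y‖_p²`; integrating twice over `[0, 1]` gives the inequality.
For partial sums of a martingale difference sequence the orthogonality holds with `X = S k` and
`Y = ξ (k + 1)`, because `|S k|^(p-2) S k` is `ℱ k`-measurable. By induction
`‖S n‖_p² ≤ (p - 1) ∑ ‖ξ i‖_p²`; finally `‖ξ i‖_p² ≤ |ξ i ^ 2|_p` (Lyapunov) and `√(p - 1) ≤ p - 1`.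
-/

open MeasureTheory Finset Filter Topology

theorem hasDerivAt_abs_rpow_mul_self {q : ℝ} (hq : 0 ≤ q) (z : ℝ) :
    HasDerivAt (fun z : ℝ => |z| ^ q * z) ((q + 1) * |z| ^ q) z := by
  rcases eq_or_ne z 0 with rfl | hz
  · -- the difference quotient at `0` is `|t| ^ q`, which is continuous
    rw [hasDerivAt_iff_tendsto_slope_zero]
    have hcont : Continuous fun t : ℝ => |t| ^ q :=
      (Real.continuous_rpow_const hq).comp continuous_abs
    refine (hcont.tendsto 0).mono_left nhdsWithin_le_nhds |>.congr' ?_ |>.trans_eq ?_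
    · filter_upwards [self_mem_nhdsWithin] with t (ht : t ≠ 0)
      simp [field]
    · rcases hq.eq_or_lt with rfl | hq <;> simp [*, Real.zero_rpow, ne_of_gt]
  · refine (((hasDerivAt_abs hz).rpow_const (Or.inl (abs_ne_zero.2 hz))).mul
      (hasDerivAt_id' z)).congr_deriv ?_
    have hsign : (SignType.sign z : ℝ) * z = |z| := sign_mul_self z
    rw [Real.rpow_sub_one (abs_ne_zero.2 hz)]
    calc (SignType.sign z : ℝ) * q * (|z| ^ q / |z|) * z + |z| ^ q * 1
        = q * |z| ^ q * ((SignType.sign z * z) / |z|) + |z| ^ q := by ring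
      _ = (q + 1) * |z| ^ q := by rw [hsign, div_self (abs_ne_zero.2 hz)]; ring

theorem abs_abs_rpow_mul_self {q : ℝ} (hq : 0 ≤ q) (z : ℝ) :
    |(|z| ^ q * z)| = |z| ^ (q + 1) := by
  rw [abs_mul, abs_of_nonneg (by positivity), Real.rpow_add_one' (abs_nonneg z) (by linarith)]

theorem abs_add_mul_le_of_dist_lt_one {x y t t₀ : ℝ} (ht : dist t t₀ < 1) :
    |x + t * y| ≤ |x| + (|t₀| + 1) * |y| := by
  have : |t| ≤ |t₀| + 1 := by
    have := abs_sub_abs_le_abs_sub t t₀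
    rw [Real.dist_eq] at ht
    linarith
  calc |x + t * y| ≤ |x| + |t| * |y| := by rw [← abs_mul]; exact abs_add_le _ _
    _ ≤ |x| + (|t₀| + 1) * |y| := by gcongr

theorem sub_le_sub_of_hasDerivAt_le {f g f' g' : ℝ → ℝ} (hf : ∀ t, HasDerivAt f (f' t) t)
    (hg : ∀ t, HasDerivAt g (g' t) t) (hle : ∀ t, 0 ≤ t → f' t ≤ g' t) {t : ℝ} (ht : 0 ≤ t) :
    f t - f 0 ≤ g t - g 0 := by
  have hmono : MonotoneOn (fun s => g s - f s) (Set.Ici 0) := by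
    refine monotoneOn_of_hasDerivWithinAt_nonneg (convex_Ici 0)
      (fun s _ => ((hg s).sub (hf s)).continuousAt.continuousWithinAt)
      (fun s _ => ((hg s).sub (hf s)).hasDerivWithinAt) fun s hs => ?_
    rw [interior_Ici] at hs
    exact sub_nonneg.2 (hle s (le_of_lt hs))
  linarith [hmono (Set.mem_Ici.2 le_rfl) ht ht]

theorem rpow_two_div_le_of_hasDerivAt_of_pos {p c : ℝ} (hp : 2 ≤ p) {u v w : ℝ → ℝ}
    (hu : ∀ t, HasDerivAt u (p * v t) t) (hv : ∀ t, HasDerivAt v ((p - 1) * w t) t)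
    (hu_pos : ∀ t, 0 < u t) (hw : ∀ t, w t ≤ u t ^ (1 - 2 / p) * c) (hv0 : v 0 = 0) :
    u 1 ^ (2 / p) ≤ u 0 ^ (2 / p) + (p - 1) * c := by
  have hp0 : 0 < p := by linarith
  have h2p : 2 / p ≤ 1 := (div_le_one hp0).2 hp
  -- `2 η` is the derivative of `u ^ (2 / p)`
  set η : ℝ → ℝ := fun t => u t ^ (2 / p - 1) * v t
  have hη : ∀ t, HasDerivAt η
      ((p * v t) * (2 / p - 1) * u t ^ (2 / p - 1 - 1) * v t
        + u t ^ (2 / p - 1) * ((p - 1) * w t)) t := fun t =>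
    ((hu t).rpow_const (Or.inl (hu_pos t).ne')).mul (hv t)
  have hη_le : ∀ t, 0 ≤ t → η t ≤ (p - 1) * c * t := by
    intro t ht
    have := sub_le_sub_of_hasDerivAt_le hη (fun t => hasDerivAt_mul_const ((p - 1) * c))
      (fun s _ => ?_) ht
    · simpa [η, hv0, mul_comm] using this
    -- the first term is `≤ 0` since `2 / p ≤ 1`; the second by the bound on `w`
    have h1 : (p * v s) * (2 / p - 1) * u s ^ (2 / p - 1 - 1) * v s ≤ 0 := by
      have : 0 ≤ p * u s ^ (2 / p - 1 - 1) * v s ^ 2 := by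
        have := (hu_pos s).le; positivity
      nlinarith
    have h2 : u s ^ (2 / p - 1) * ((p - 1) * w s) ≤ (p - 1) * c := by
      calc u s ^ (2 / p - 1) * ((p - 1) * w s)
          ≤ u s ^ (2 / p - 1) * ((p - 1) * (u s ^ (1 - 2 / p) * c)) := by
            gcongr
            · exact (Real.rpow_pos_of_pos (hu_pos s) _).le
            · linarith
            · exact hw s
        _ = (p - 1) * c * (u s ^ (2 / p - 1) * u s ^ (1 - 2 / p)) := by ring
        _ = (p - 1) * c := by rw [← Real.rpow_add (hu_pos s)]; simp
    linarith
  have hφ : ∀ t, HasDerivAt (fun t => u t ^ (2 / p)) (2 * η t) t := fun t =>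
    ((hu t).rpow_const (Or.inl (hu_pos t).ne')).congr_deriv (by simp only [η]; field_simp)
  have hK : ∀ t, HasDerivAt (fun t => (p - 1) * c * t ^ 2) ((p - 1) * c * (2 * t)) t := by
    intro t; simpa using (hasDerivAt_pow 2 t).const_mul ((p - 1) * c)
  have := sub_le_sub_of_hasDerivAt_le hφ hK (fun t ht => by linarith [hη_le t ht]) zero_le_one
  linarith

theorem rpow_two_div_le_of_hasDerivAt {p c : ℝ} (hp : 2 ≤ p) (hc : 0 ≤ c) {u v w : ℝ → ℝ}
    (hu : ∀ t, HasDerivAt u (p * v t) t) (hv : ∀ t, HasDerivAt v ((p - 1) * w t) t)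
    (hu_nonneg : ∀ t, 0 ≤ u t) (hw : ∀ t, w t ≤ u t ^ (1 - 2 / p) * c) (hv0 : v 0 = 0) :
    u 1 ^ (2 / p) ≤ u 0 ^ (2 / p) + (p - 1) * c := by
  have hp0 : 0 < p := by linarith
  have h2p : 0 ≤ 1 - 2 / p := sub_nonneg.2 ((div_le_one hp0).2 hp)
  -- apply the positive case to `u + ε` and let `ε → 0`
  have hε : ∀ ε > 0, (u 1 + ε) ^ (2 / p) ≤ (u 0 + ε) ^ (2 / p) + (p - 1) * c := by
    intro ε hε
    refine rpow_two_div_le_of_hasDerivAt_of_pos hp (fun t => (hu t).add_const ε) hv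
      (fun t => by linarith [hu_nonneg t]) (fun t => (hw t).trans ?_) hv0
    gcongr
    · exact hu_nonneg t
    · linarith
  have hlim : ∀ a : ℝ, Tendsto (fun ε => (a + ε) ^ (2 / p)) (𝓝[>] 0) (𝓝 (a ^ (2 / p))) := by
    intro a
    have := ((Real.continuous_rpow_const (by positivity : (0 : ℝ) ≤ 2 / p)).comp
      (continuous_const_add a)).tendsto 0
    simpa [Function.comp_def] using this.mono_left nhdsWithin_le_nhds
  exact le_of_tendsto_of_tendsto (hlim _) ((hlim _).add_const _)
    (eventually_nhdsWithin_of_forall hε)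

section

variable {Ω : Type*} [MeasurableSpace Ω] {μ : Measure Ω}

theorem MeasureTheory.MemLp.integrable_abs_rpow {p : ℝ} (hp : 0 < p) {f : Ω → ℝ}
    (hf : MemLp f (ENNReal.ofReal p) μ) : Integrable (fun ω => |f ω| ^ p) μ := by
  simpa [ENNReal.toReal_ofReal hp.le] using
    hf.integrable_norm_rpow (by simpa using hp) ENNReal.ofReal_ne_top

theorem integrable_abs_rpow_mul_abs_pow {p r : ℝ} (hp : 0 < p) (hr : 0 ≤ r) {k : ℕ}
    (hrk : r + k = p) {f g : Ω → ℝ} (hf : MemLp f (ENNReal.ofReal p) μ)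
    (hg : MemLp g (ENNReal.ofReal p) μ) :
    Integrable (fun ω => |f ω| ^ r * |g ω| ^ k) μ := by
  have hf' := hf.norm_rpow_div (ENNReal.ofReal r)
  have hg' := hg.norm_rpow_div (ENNReal.ofReal k)
  simp only [Real.norm_eq_abs, ENNReal.toReal_ofReal hr, ENNReal.toReal_ofReal k.cast_nonneg,
    Real.rpow_natCast] at hf' hg'
  have hP0 : ENNReal.ofReal p ≠ 0 := by simpa using hp
  -- Hölder: `p / r` and `p / k` are conjugate exponents
  have : ENNReal.HolderTriple (ENNReal.ofReal p / ENNReal.ofReal r)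
      (ENNReal.ofReal p / ENNReal.ofReal k) 1 := ⟨by
    rw [ENNReal.inv_div (Or.inr ENNReal.ofReal_ne_top) (Or.inr hP0),
      ENNReal.inv_div (Or.inr ENNReal.ofReal_ne_top) (Or.inr hP0), ENNReal.div_add_div_same,
      ← ENNReal.ofReal_add hr k.cast_nonneg, hrk, ENNReal.div_self hP0 ENNReal.ofReal_ne_top,
      inv_one]⟩
  exact memLp_one_iff_integrable.1 (hg'.smul hf')

theorem integrable_comp_mul_pow {g : ℝ → ℝ} {p r C : ℝ} (hg : Continuous g)
    (hg_le : ∀ z, |g z| ≤ C * |z| ^ r) (hp : 0 < p) (hr : 0 ≤ r) {k : ℕ} (hrk : r + k = p)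
    {X Y : Ω → ℝ} (hX : MemLp X (ENNReal.ofReal p) μ) (hY : MemLp Y (ENNReal.ofReal p) μ) :
    Integrable (fun ω => g (X ω) * Y ω ^ k) μ := by
  refine ((integrable_abs_rpow_mul_abs_pow hp hr hrk hX hY).const_mul C).mono'
    ((hg.comp_aestronglyMeasurable hX.1).mul (hY.1.pow k)) (ae_of_all _ fun ω => ?_)
  rw [Real.norm_eq_abs, abs_mul, abs_pow, ← mul_assoc]
  exact mul_le_mul_of_nonneg_right (hg_le _) (by positivity)

theorem hasDerivAt_integral_comp_add_mul_pow {g g' : ℝ → ℝ} {p r C : ℝ}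
    (hg : ∀ z, HasDerivAt g (g' z) z) (hg' : Continuous g')
    (hg_le : ∀ z, |g z| ≤ C * |z| ^ (r + 1)) (hg'_le : ∀ z, |g' z| ≤ C * |z| ^ r)
    (hr : 0 ≤ r) {k : ℕ} (hrk : r + 1 + k = p)
    {X Y : Ω → ℝ} (hX : MemLp X (ENNReal.ofReal p) μ) (hY : MemLp Y (ENNReal.ofReal p) μ)
    (t₀ : ℝ) :
    HasDerivAt (fun t => ∫ ω, g (X ω + t * Y ω) * Y ω ^ k ∂μ)
      (∫ ω, g' (X ω + t₀ * Y ω) * Y ω ^ (k + 1) ∂μ) t₀ := by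
  have hp : 0 < p := by rw [← hrk]; positivity
  have hC : 0 ≤ C := (abs_nonneg _).trans (by simpa using hg'_le 1)
  have hgc : Continuous g := continuous_iff_continuousAt.2 fun z => (hg z).continuousAt
  have hZ : ∀ t, MemLp (fun ω => X ω + t * Y ω) (ENNReal.ofReal p) μ := fun t =>
    hX.add (hY.const_mul t)
  -- on the ball `|t - t₀| < 1`, `|X + t Y|` is dominated by `|X| + c |Y|`
  set c := |t₀| + 1
  have hW : MemLp (fun ω => |X ω| + c * |Y ω|) (ENNReal.ofReal p) μ :=
    hX.abs.add (hY.abs.const_mul c)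
  refine (hasDerivAt_integral_of_dominated_loc_of_deriv_le
    (F := fun t ω => g (X ω + t * Y ω) * Y ω ^ k)
    (F' := fun t ω => g' (X ω + t * Y ω) * Y ω ^ (k + 1)) (Metric.ball_mem_nhds t₀ one_pos)
    (Eventually.of_forall fun t => ((hgc.comp_aestronglyMeasurable (hZ t).1).mul (hY.1.pow k)))
    (integrable_comp_mul_pow hgc hg_le hp (by positivity) hrk (hZ t₀) hY)
    ((hg'.comp_aestronglyMeasurable (hZ t₀).1).mul (hY.1.pow (k + 1))) ?_
    ((integrable_abs_rpow_mul_abs_pow (k := k + 1) hp hr (by push_cast; linarith) hW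
      hY).const_mul C)
    (ae_of_all _ fun ω t _ => ?_)).2
  · filter_upwards with ω t ht
    rw [Real.norm_eq_abs, abs_mul, abs_pow, ← mul_assoc,
      abs_of_nonneg (by positivity : 0 ≤ |X ω| + c * |Y ω|)]
    gcongr
    refine (hg'_le _).trans (by gcongr; exact abs_add_mul_le_of_dist_lt_one ht)
  · exact ((hg _).comp t ((hasDerivAt_mul_const (Y ω)).const_add (X ω))).mul_const _
      |>.congr_deriv (by ring)

theorem hasDerivAt_integral_abs_add_mul_rpow {p : ℝ} (hp : 2 ≤ p) {X Y : Ω → ℝ}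
    (hX : MemLp X (ENNReal.ofReal p) μ) (hY : MemLp Y (ENNReal.ofReal p) μ) (t : ℝ) :
    HasDerivAt (fun t => ∫ ω, |X ω + t * Y ω| ^ p ∂μ)
      (p * ∫ ω, |X ω + t * Y ω| ^ (p - 2) * (X ω + t * Y ω) * Y ω ∂μ) t := by
  have h := hasDerivAt_integral_comp_add_mul_pow (g := fun z => |z| ^ p)
    (g' := fun z => p * |z| ^ (p - 2) * z) (C := p) (r := p - 1) (k := 0)
    (fun z => hasDerivAt_abs_rpow z (by linarith)) (by fun_prop (disch := linarith))
    (fun z => by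
      rw [sub_add_cancel, abs_of_nonneg (by positivity)]
      exact le_mul_of_one_le_left (by positivity) (by linarith))
    (fun z => by
      rw [mul_assoc, abs_mul, abs_abs_rpow_mul_self (by linarith), abs_of_nonneg (by linarith),
        show p - 2 + 1 = p - 1 by ring])
    (by linarith) (by simp) hX hY t
  simpa [mul_assoc, integral_const_mul] using h

theorem hasDerivAt_integral_abs_add_mul_rpow_sub_two_mul {p : ℝ} (hp : 2 ≤ p) {X Y : Ω → ℝ}
    (hX : MemLp X (ENNReal.ofReal p) μ) (hY : MemLp Y (ENNReal.ofReal p) μ) (t : ℝ) :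
    HasDerivAt (fun t => ∫ ω, |X ω + t * Y ω| ^ (p - 2) * (X ω + t * Y ω) * Y ω ∂μ)
      ((p - 1) * ∫ ω, |X ω + t * Y ω| ^ (p - 2) * Y ω ^ 2 ∂μ) t := by
  have h := hasDerivAt_integral_comp_add_mul_pow (g := fun z => |z| ^ (p - 2) * z)
    (g' := fun z => (p - 2 + 1) * |z| ^ (p - 2)) (C := p - 2 + 1) (r := p - 2) (k := 1)
    (hasDerivAt_abs_rpow_mul_self (by linarith)) (by fun_prop (disch := linarith))
    (fun z => by
      rw [abs_abs_rpow_mul_self (by linarith)]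
      exact le_mul_of_one_le_left (by positivity) (by linarith))
    (fun z => by rw [abs_mul, abs_of_nonneg (by linarith), abs_of_nonneg (by positivity)])
    (by linarith) (by push_cast; ring) hX hY t
  simpa [mul_assoc, integral_const_mul, show p - 2 + 1 = p - 1 by ring] using h

theorem integral_rpow_mul_rpow_le {f g : Ω → ℝ} (hf0 : ∀ ω, 0 ≤ f ω) (hg0 : ∀ ω, 0 ≤ g ω)
    (hf : Integrable f μ) (hg : Integrable g μ) {a b : ℝ} (ha : 0 ≤ a) (hb : 0 ≤ b)
    (hab : a + b = 1) :
    ∫ ω, f ω ^ a * g ω ^ b ∂μ ≤ (∫ ω, f ω ∂μ) ^ a * (∫ ω, g ω ∂μ) ^ b := by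
  have key := ENNReal.lintegral_mul_norm_pow_le hf.1.aemeasurable.ennreal_ofReal
    hg.1.aemeasurable.ennreal_ofReal ha hb hab (μ := μ)
  simp only [ENNReal.ofReal_rpow_of_nonneg (hf0 _) ha, ENNReal.ofReal_rpow_of_nonneg (hg0 _) hb,
    ← ENNReal.ofReal_mul (Real.rpow_nonneg (hf0 _) a)] at key
  rw [integral_eq_lintegral_of_nonneg_ae
      (ae_of_all _ fun ω => mul_nonneg (Real.rpow_nonneg (hf0 ω) a) (Real.rpow_nonneg (hg0 ω) b))
      (by fun_prop), integral_eq_lintegral_of_nonneg_ae (ae_of_all _ hf0) hf.1,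
    integral_eq_lintegral_of_nonneg_ae (ae_of_all _ hg0) hg.1, ENNReal.toReal_rpow,
    ENNReal.toReal_rpow, ← ENNReal.toReal_mul]
  exact ENNReal.toReal_mono (ENNReal.mul_ne_top
    (ENNReal.rpow_ne_top_of_nonneg ha hf.lintegral_lt_top.ne)
    (ENNReal.rpow_ne_top_of_nonneg hb hg.lintegral_lt_top.ne)) key

theorem integral_abs_rpow_sub_two_mul_sq_le {p : ℝ} (hp : 2 ≤ p) {Z Y : Ω → ℝ}
    (hZ : MemLp Z (ENNReal.ofReal p) μ) (hY : MemLp Y (ENNReal.ofReal p) μ) :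
    ∫ ω, |Z ω| ^ (p - 2) * Y ω ^ 2 ∂μ
      ≤ (∫ ω, |Z ω| ^ p ∂μ) ^ (1 - 2 / p) * (∫ ω, |Y ω| ^ p ∂μ) ^ (2 / p) := by
  have hp0 : 0 < p := by linarith
  have h2p : 2 / p ≤ 1 := (div_le_one hp0).2 hp
  refine le_of_eq_of_le (integral_congr_ae (ae_of_all _ fun ω => ?_))
    (integral_rpow_mul_rpow_le (fun ω => by positivity) (fun ω => by positivity)
      (hZ.integrable_abs_rpow hp0) (hY.integrable_abs_rpow hp0) (by linarith) (by positivity)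
      (sub_add_cancel 1 _))
  simp only
  rw [← Real.rpow_mul (abs_nonneg _), ← Real.rpow_mul (abs_nonneg _), mul_sub, mul_one,
    mul_div_cancel₀ _ hp0.ne', ← sq_abs (Y ω)]
  norm_cast

theorem integral_abs_add_rpow_two_div_le {p : ℝ} (hp : 2 ≤ p) {X Y : Ω → ℝ}
    (hX : MemLp X (ENNReal.ofReal p) μ) (hY : MemLp Y (ENNReal.ofReal p) μ)
    (horth : ∫ ω, |X ω| ^ (p - 2) * X ω * Y ω ∂μ = 0) :
    (∫ ω, |X ω + Y ω| ^ p ∂μ) ^ (2 / p)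
      ≤ (∫ ω, |X ω| ^ p ∂μ) ^ (2 / p) + (p - 1) * (∫ ω, |Y ω| ^ p ∂μ) ^ (2 / p) := by
  have hZ : ∀ t, MemLp (fun ω => X ω + t * Y ω) (ENNReal.ofReal p) μ := fun t =>
    hX.add (hY.const_mul t)
  have := rpow_two_div_le_of_hasDerivAt hp (by positivity)
    (hasDerivAt_integral_abs_add_mul_rpow hp hX hY)
    (hasDerivAt_integral_abs_add_mul_rpow_sub_two_mul hp hX hY)
    (fun t => integral_nonneg fun ω => by positivity)
    (fun t => integral_abs_rpow_sub_two_mul_sq_le hp (hZ t) hY) (by simpa using horth)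
  simpa using this

theorem integral_abs_rpow_rpow_two_div_le [IsProbabilityMeasure μ] {p : ℝ} (hp : 0 < p)
    {f : Ω → ℝ} (hf : MemLp f (ENNReal.ofReal (2 * p)) μ) :
    (∫ ω, |f ω| ^ p ∂μ) ^ (2 / p) ≤ (∫ ω, |f ω ^ 2| ^ p ∂μ) ^ (1 / p) := by
  have hsq : ∀ ω, |f ω ^ 2| ^ p = |f ω| ^ (2 * p) := fun ω => by
    rw [abs_pow, Real.rpow_mul (abs_nonneg _)]; norm_cast
  have hf2 : Integrable (fun ω => |f ω ^ 2| ^ p) μ := by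
    simpa only [hsq] using hf.integrable_abs_rpow (by positivity)
  -- Cauchy–Schwarz against the constant `1`
  have hCS : ∫ ω, |f ω| ^ p ∂μ ≤ (∫ ω, |f ω ^ 2| ^ p ∂μ) ^ (1 / 2 : ℝ) := by
    have := integral_rpow_mul_rpow_le (fun ω => by positivity) (fun _ => zero_le_one) hf2
      (integrable_const 1) (a := 1 / 2) (b := 1 / 2) (by norm_num) (by norm_num) (by norm_num)
    simp only [Real.one_rpow, mul_one, integral_const, probReal_univ, smul_eq_mul] at this
    refine le_of_eq_of_le (integral_congr_ae (ae_of_all _ fun ω => ?_)) this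
    simp only [hsq]
    rw [← Real.rpow_mul (abs_nonneg _)]; ring_nf
  calc (∫ ω, |f ω| ^ p ∂μ) ^ (2 / p)
      ≤ ((∫ ω, |f ω ^ 2| ^ p ∂μ) ^ (1 / 2 : ℝ)) ^ (2 / p) := by gcongr
    _ = (∫ ω, |f ω ^ 2| ^ p ∂μ) ^ (1 / p) := by
        rw [← Real.rpow_mul (integral_nonneg fun ω => by positivity)]; ring_nf

end

theorem integral_mul_eq_zero_of_condExp_eq_zero {Ω : Type*} {m m₀ : MeasurableSpace Ω}
    {μ : Measure Ω} (hm : m ≤ m₀) [SigmaFinite (μ.trim hm)] {f g : Ω → ℝ}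
    (hf : StronglyMeasurable[m] f) (hfg : Integrable (f * g) μ) (hg : Integrable g μ)
    (hcond : μ[g | m] =ᵐ[μ] 0) :
    ∫ ω, f ω * g ω ∂μ = 0 := by
  change ∫ ω, (f * g) ω ∂μ = 0
  rw [← integral_condExp hm, integral_eq_zero_of_ae]
  filter_upwards [condExp_mul_of_stronglyMeasurable_left hf hfg hg, hcond] with ω h1 h2
  simp [h1, h2]

theorem integral_abs_sum_rpow_two_div_le {Ω : Type*} {m0 : MeasurableSpace Ω} {μ : Measure Ω}
    [IsFiniteMeasure μ] {ℱ : ℕ → MeasurableSpace Ω} (hℱmono : Monotone ℱ)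
    (hℱle : ∀ i, ℱ i ≤ m0) {ξ : ℕ → Ω → ℝ} (hadapted : ∀ i, StronglyMeasurable[ℱ i] (ξ i))
    (hmds : ∀ i, 1 ≤ i → μ[ξ i | ℱ (i - 1)] =ᵐ[μ] 0) {p : ℝ} (hp : 2 ≤ p)
    (hLp : ∀ i, MemLp (ξ i) (ENNReal.ofReal p) μ) (n : ℕ) :
    (∫ ω, |∑ i ∈ Icc 1 n, ξ i ω| ^ p ∂μ) ^ (2 / p)
      ≤ (p - 1) * ∑ i ∈ Icc 1 n, (∫ ω, |ξ i ω| ^ p ∂μ) ^ (2 / p) := by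
  have hp0 : 0 < p := by linarith
  induction n with
  | zero => simp [Real.zero_rpow hp0.ne', Real.zero_rpow (div_pos two_pos hp0).ne']
  | succ n ih =>
    set S := fun ω => ∑ i ∈ Icc 1 n, ξ i ω
    have hS : MemLp S (ENNReal.ofReal p) μ := memLp_finsetSum _ fun i _ => hLp i
    have hSm : StronglyMeasurable[ℱ n] S := Finset.stronglyMeasurable_fun_sum _ fun i hi =>
      (hadapted i).mono (hℱmono (mem_Icc.1 hi).2)
    have hφ : Continuous fun z : ℝ => |z| ^ (p - 2) * z := by fun_prop (disch := linarith)
    have hint : Integrable (fun ω => |S ω| ^ (p - 2) * S ω * ξ (n + 1) ω) μ := by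
      simpa using integrable_comp_mul_pow (C := 1) (r := p - 2 + 1) (k := 1) hφ
        (fun z => by rw [one_mul, abs_abs_rpow_mul_self (by linarith)]) hp0 (by linarith)
        (by ring) hS (hLp (n + 1))
    have horth : ∫ ω, |S ω| ^ (p - 2) * S ω * ξ (n + 1) ω ∂μ = 0 :=
      integral_mul_eq_zero_of_condExp_eq_zero (hℱle n) (hφ.comp_stronglyMeasurable hSm) hint
        ((hLp _).integrable (ENNReal.one_le_ofReal.2 (by linarith)))
        (by simpa using hmds (n + 1) (by omega))
    simp only [sum_Icc_succ_top (Nat.le_add_left 1 n)]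
    calc (∫ ω, |S ω + ξ (n + 1) ω| ^ p ∂μ) ^ (2 / p)
        ≤ (∫ ω, |S ω| ^ p ∂μ) ^ (2 / p) + (p - 1) * (∫ ω, |ξ (n + 1) ω| ^ p ∂μ) ^ (2 / p) :=
          integral_abs_add_rpow_two_div_le hp hS (hLp _) horth
      _ ≤ _ := by rw [mul_add]; gcongr

theorem martingale_p_quadratic_variation_bound_general
    {Ω : Type*} {m0 : MeasurableSpace Ω} (μ : Measure Ω) [IsProbabilityMeasure μ]
    (ℱ : ℕ → MeasurableSpace Ω) (hℱmono : Monotone ℱ) (hℱle : ∀ i, ℱ i ≤ m0)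
    (ξ : ℕ → Ω → ℝ)
    (hadapted : ∀ i, StronglyMeasurable[ℱ i] (ξ i))
    (hmds : ∀ i, 1 ≤ i → μ[ξ i | ℱ (i - 1)] =ᵐ[μ] 0)
    (p : ℝ) (hp : 2 ≤ p)
    (hLp : ∀ i, MemLp (ξ i) (ENNReal.ofReal (2 * p)) μ)
    (n : ℕ) :
    (∫ x, |∑ i ∈ Icc 1 n, ξ i x| ^ p ∂μ) ^ (1 / p)
      ≤ (p - 1) *
        (∑ i ∈ Icc 1 n, (∫ x, |(ξ i x) ^ 2| ^ p ∂μ) ^ (1 / p)) ^ ((1 : ℝ) / 2) := by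
  have hp0 : 0 < p := by linarith
  have hS := integral_abs_sum_rpow_two_div_le hℱmono hℱle hadapted hmds hp
    (fun i => (hLp i).mono_exponent (ENNReal.ofReal_le_ofReal (by linarith))) n
  have hξ : ∑ i ∈ Icc 1 n, (∫ x, |ξ i x| ^ p ∂μ) ^ (2 / p)
      ≤ ∑ i ∈ Icc 1 n, (∫ x, |(ξ i x) ^ 2| ^ p ∂μ) ^ (1 / p) :=
    sum_le_sum fun i _ => integral_abs_rpow_rpow_two_div_le hp0 (hLp i)
  have hA : 0 ≤ ∫ x, |∑ i ∈ Icc 1 n, ξ i x| ^ p ∂μ := integral_nonneg fun x => by positivity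
  calc (∫ x, |∑ i ∈ Icc 1 n, ξ i x| ^ p ∂μ) ^ (1 / p)
      = ((∫ x, |∑ i ∈ Icc 1 n, ξ i x| ^ p ∂μ) ^ (2 / p)) ^ ((1 : ℝ) / 2) := by
        rw [← Real.rpow_mul hA]; ring_nf
    _ ≤ ((p - 1) * ∑ i ∈ Icc 1 n, (∫ x, |ξ i x| ^ p ∂μ) ^ (2 / p)) ^ ((1 : ℝ) / 2) := by
        gcongr
    _ = (p - 1) ^ ((1 : ℝ) / 2) * (∑ i ∈ Icc 1 n, (∫ x, |ξ i x| ^ p ∂μ) ^ (2 / p))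
          ^ ((1 : ℝ) / 2) := Real.mul_rpow (by linarith) (sum_nonneg fun i _ => by positivity)
    _ ≤ (p - 1) * (∑ i ∈ Icc 1 n, (∫ x, |(ξ i x) ^ 2| ^ p ∂μ) ^ (1 / p)) ^ ((1 : ℝ) / 2) := by
        gcongr
        · linarith
        · exact Real.rpow_le_self_of_one_le (by linarith) (by norm_num)

/-- With the `p`-quadratic variation
`[f]_{n,p} = (∑_{i=1}^n |ξ i ^ 2|_p)^{1/2}`, one has `|S n|_p ≤ (p-1) · [f]_{n,p}`
for `p ≥ 2`. -/
theorem martingale_p_quadratic_variation_bound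
    {Ω : Type*} {m0 : MeasurableSpace Ω} (μ : Measure Ω) [IsProbabilityMeasure μ]
    (ℱ : ℕ → MeasurableSpace Ω) (hℱmono : Monotone ℱ) (hℱle : ∀ i, ℱ i ≤ m0)
    (ξ : ℕ → Ω → ℝ)
    (hadapted : ∀ i, StronglyMeasurable[ℱ i] (ξ i))
    (hmds : ∀ i, 1 ≤ i → μ[ξ i | ℱ (i - 1)] =ᵐ[μ] 0)
    (p : ℝ) (hp : 2 ≤ p)
    (hLp : ∀ i, MemLp (ξ i) (ENNReal.ofReal (2 * p)) μ)
    (n : ℕ) (hn : 1 ≤ n) :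
    (∫ x, |∑ i ∈ Icc 1 n, ξ i x| ^ p ∂μ) ^ (1 / p)
      ≤ (p - 1) *
        (∑ i ∈ Icc 1 n, (∫ x, |(ξ i x) ^ 2| ^ p ∂μ) ^ (1 / p)) ^ ((1 : ℝ) / 2) :=
  martingale_p_quadratic_variation_bound_general μ ℱ hℱmono hℱle ξ hadapted hmds p hp hLp n
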